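/- Let S be a closed subspace of a Banach space B, E a Banach space, and u : S → E a bounded linear map with ||u|| ≤ η ≤ 1. Form the pushout P = (B ⊕₁ E)/N where B ⊕₁ E carries the norm ||(b,e)|| = ||b|| + ||e|| and N = {(s, -u(s)) : s ∈ S}. Then the map i_E : E → P, e ↦ [(0,e)], is an isometric embedding. -/

import Mathlib

/-!
A representative of `[(0, e)]` has the form `(s, e - u s)` with `s ∈ S`, and its ℓ¹-norm is
`‖s‖ + ‖e - u s‖ ≥ ‖u s‖ + ‖e - u s‖ ≥ ‖e‖` because `‖u‖ ≤ 1`. So `(0, e)` already has minimal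
norm in its class, while the quotient map never increases norms.
-/

open Filter Topology

variable {B E : Type*} [NormedAddCommGroup B] [NormedSpace ℝ B]
  [NormedAddCommGroup E] [NormedSpace ℝ E]

/-- The subspace `N = {(s, -u(s)) : s ∈ S}` of the ℓ¹-direct sum `B ⊕₁ E`. -/
noncomputable def pushoutKer (S : Submodule ℝ B) (u : S →L[ℝ] E) :
    Submodule ℝ (WithLp 1 (B × E)) :=
  LinearMap.range ((WithLp.linearEquiv 1 ℝ (B × E)).symm.toLinearMap.comp
    (LinearMap.prod S.subtype (-(u : S →ₗ[ℝ] E))))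

theorem Submodule.Quotient.norm_mk_eq_of_forall_norm_le_norm_add {R M : Type*} [Ring R]
    [SeminormedAddCommGroup M] [Module R M] {N : Submodule R M} {m : M}
    (h : ∀ n ∈ N, ‖m‖ ≤ ‖m + n‖) : ‖(Submodule.Quotient.mk m : M ⧸ N)‖ = ‖m‖ := by
  refine le_antisymm (Submodule.Quotient.norm_mk_le N m) (QuotientAddGroup.le_norm_iff.2 ?_)
  intro m' hm'
  have hmem : m' - m ∈ N := (Submodule.Quotient.eq N).1 hm'
  simpa using h _ hmem

theorem mem_pushoutKer {S : Submodule ℝ B} {u : S →L[ℝ] E} {x : WithLp 1 (B × E)} :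
    x ∈ pushoutKer S u ↔ ∃ s : S, WithLp.toLp 1 ((s : B), -u s) = x :=
  Iff.rfl

theorem norm_le_norm_add_of_mem_pushoutKer {S : Submodule ℝ B} {u : S →L[ℝ] E} (hu : ‖u‖ ≤ 1)
    (e : E) {n : WithLp 1 (B × E)} (hn : n ∈ pushoutKer S u) :
    ‖WithLp.toLp 1 ((0 : B), e)‖ ≤ ‖WithLp.toLp 1 ((0 : B), e) + n‖ := by
  obtain ⟨s, rfl⟩ := mem_pushoutKer.1 hn
  have hus : ‖u s‖ ≤ ‖(s : B)‖ := u.le_of_opNorm_le hu s |>.trans_eq (one_mul _)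
  calc ‖WithLp.toLp 1 ((0 : B), e)‖ = ‖e‖ := by simp
    _ ≤ ‖u s‖ + ‖e - u s‖ := norm_le_norm_add_norm_sub' e (u s)
    _ ≤ ‖(s : B)‖ + ‖e - u s‖ := by gcongr
    _ = ‖WithLp.toLp 1 ((0 : B), e) + WithLp.toLp 1 ((s : B), -u s)‖ := by
      rw [WithLp.prod_norm_eq_of_L1]
      simp [sub_eq_add_neg]

theorem stmt_7_general
    (S : Submodule ℝ B)
    (u : S →L[ℝ] E) (η : ℝ) (hη1 : η ≤ 1) (hu : ‖u‖ ≤ η) :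
    ∀ e : E,
      ‖(pushoutKer S u).mkQ ((WithLp.equiv 1 (B × E)).symm (0, e))‖ = ‖e‖ := by
  intro e
  have hmin := Submodule.Quotient.norm_mk_eq_of_forall_norm_le_norm_add fun _ hn =>
    norm_le_norm_add_of_mem_pushoutKer (hu.trans hη1) e hn
  simpa using hmin

/-- In the Kisliakov pushout `P = (B ⊕₁ E)/N`, `N = {(s, -u(s)) : s ∈ S}` with
`‖u‖ ≤ η ≤ 1`, the canonical map `i_E : E → P`, `e ↦ [(0,e)]`, is isometric. -/
theorem stmt_7 [CompleteSpace B] [CompleteSpace E]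
    (S : Submodule ℝ B) (hS : IsClosed (S : Set B))
    (u : S →L[ℝ] E) (η : ℝ) (hη0 : 0 ≤ η) (hη1 : η ≤ 1) (hu : ‖u‖ ≤ η) :
    ∀ e : E,
      ‖(pushoutKer S u).mkQ ((WithLp.equiv 1 (B × E)).symm (0, e))‖ = ‖e‖ :=
  stmt_7_general S u η hη1 hu
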